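/- arXiv:0906.3896 — 2 statements merged into one kernel-verified Lean document; each statement's English description precedes it below -/
import Mathlib

section
/- Let n ≥ 2 be an integer and define the family of open squares C = {□_{n−1}(i, i−n+1) : 1 ≤ i ≤ n−1} ∪ {□_{n−1}(i−n, n+i−1) : 2 ≤ i ≤ n}. Let a, b ∈ {1,…,n} and let c⁻, c⁺ be real numbers with c⁻ ∈ (a−1, a) and c⁺ ∈ (n+b−1, n+b). Then there exists a real number c such that every square of C is intersected by the horizontal line {y = c⁻}, the horizontal line {y = c⁺}, or the vertical line {x = c}, if and only if b ≥ a. -/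
/-- The vertical line `x = c`. -/
def vLine (c : ℝ) : Set (ℝ × ℝ) := {p : ℝ × ℝ | p.1 = c}

/-- The horizontal line `y = c`. -/
def hLine (c : ℝ) : Set (ℝ × ℝ) := {p : ℝ × ℝ | p.2 = c}

/-- The open axis-parallel square `□_l(x, y) = (x, x+l) × (y, y+l)`. -/
def openSquare (l x y : ℝ) : Set (ℝ × ℝ) := Set.Ioo x (x + l) ×ˢ Set.Ioo y (y + l)

/-- The horizontal consistency gadget
`C_h = {□_{n−1}(i, i−n+1) : 1 ≤ i ≤ n−1} ∪ {□_{n−1}(i−n, n+i−1) : 2 ≤ i ≤ n}`. -/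
def ChGadget (n : ℕ) : Set (Set (ℝ × ℝ)) :=
  {s | ∃ i : ℕ, 1 ≤ i ∧ i ≤ n - 1 ∧
      s = openSquare ((n : ℝ) - 1) (i : ℝ) ((i : ℝ) - n + 1)} ∪
  {s | ∃ i : ℕ, 2 ≤ i ∧ i ≤ n ∧
      s = openSquare ((n : ℝ) - 1) ((i : ℝ) - n) ((n : ℝ) + i - 1)}

/-!
A line `y = c⁻` with `c⁻ ∈ (a-1, a)` meets the lower square `□_{n-1}(i, i-n+1)` exactly when
`a ≤ i`, a line `y = c⁺` with `c⁺ ∈ (n+b-1, n+b)` meets the upper square `□_{n-1}(i-n, n+i-1)`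
exactly when `i ≤ b`, and neither meets a square of the other kind. So the vertical line `x = c`
must cross the lower squares with `i < a` and the upper squares with `i > b`, which amounts to
`a - 1 < c < b`; such a `c` (for instance `a - 1/2`) exists iff `a ≤ b`.
-/

open Set

section Stabbing

variable {l x y : ℝ}

theorem hLine_inter_openSquare_nonempty_iff (hl : 0 < l) (c : ℝ) :
    (hLine c ∩ openSquare l x y).Nonempty ↔ c ∈ Ioo y (y + l) := by
  constructor
  · rintro ⟨p, rfl, -, hy⟩
    exact hy
  · intro hc
    exact ⟨(x + l / 2, c), rfl, ⟨by linarith, by linarith⟩, hc⟩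

theorem vLine_inter_openSquare_nonempty_iff (hl : 0 < l) (c : ℝ) :
    (vLine c ∩ openSquare l x y).Nonempty ↔ c ∈ Ioo x (x + l) := by
  constructor
  · rintro ⟨p, rfl, hx, -⟩
    exact hx
  · intro hc
    exact ⟨(c, y + l / 2), rfl, hc, by linarith, by linarith⟩

theorem lines_inter_openSquare_nonempty_iff (hl : 0 < l) (c₁ c₂ c : ℝ) :
    ((hLine c₁ ∪ hLine c₂ ∪ vLine c) ∩ openSquare l x y).Nonempty ↔
      c₁ ∈ Ioo y (y + l) ∨ c₂ ∈ Ioo y (y + l) ∨ c ∈ Ioo x (x + l) := by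
  simp only [union_inter_distrib_right, union_nonempty, hLine_inter_openSquare_nonempty_iff hl,
    vLine_inter_openSquare_nonempty_iff hl, or_assoc]

end Stabbing

section Rounding

variable {t : ℝ} {m k : ℕ}

theorem lt_natCast_iff_of_mem_Ioo (ht : t ∈ Ioo ((m : ℝ) - 1) m) : t < k ↔ m ≤ k := by
  constructor
  · intro h
    have : (m : ℝ) < k + 1 := by linarith [ht.1]
    exact Nat.lt_succ_iff.mp (by exact_mod_cast this)
  · intro h
    have : (m : ℝ) ≤ k := by exact_mod_cast h
    linarith [ht.2]

theorem natCast_sub_one_lt_iff_of_mem_Ioo (ht : t ∈ Ioo ((m : ℝ) - 1) m) :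
    (k : ℝ) - 1 < t ↔ k ≤ m := by
  constructor
  · intro h
    have : (k : ℝ) < m + 1 := by linarith [ht.2]
    exact Nat.lt_succ_iff.mp (by exact_mod_cast this)
  · intro h
    have : (k : ℝ) ≤ m := by exact_mod_cast h
    linarith [ht.1]

end Rounding

section Gadget

variable {n a b i : ℕ} {cm cp c : ℝ}

theorem lowerSquare_stabbed_iff (ha : 1 ≤ a) (hcm : cm ∈ Ioo ((a : ℝ) - 1) a)
    (hcp : (n : ℝ) ≤ cp) (hi : 1 ≤ i) (hin : i < n) :
    ((hLine cm ∪ hLine cp ∪ vLine c) ∩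
      openSquare ((n : ℝ) - 1) i ((i : ℝ) - n + 1)).Nonempty ↔
      a ≤ i ∨ c ∈ Ioo (i : ℝ) (i + (n - 1)) := by
  have hiR : (1 : ℝ) ≤ i := by exact_mod_cast hi
  have hinR : (i : ℝ) + 1 ≤ n := by exact_mod_cast hin
  have haR : (1 : ℝ) ≤ a := by exact_mod_cast ha
  have hcm_mem : cm ∈ Ioo ((i : ℝ) - n + 1) (i - n + 1 + (n - 1)) ↔ a ≤ i := by
    rw [← lt_natCast_iff_of_mem_Ioo hcm]
    refine ⟨fun h => by linarith [h.2], fun h => ⟨by linarith [hcm.1], by linarith⟩⟩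
  have hcp_not_mem : cp ∉ Ioo ((i : ℝ) - n + 1) (i - n + 1 + (n - 1)) :=
    fun h => by linarith [h.2]
  rw [lines_inter_openSquare_nonempty_iff (by linarith), hcm_mem]
  simp only [hcp_not_mem, false_or]

theorem upperSquare_stabbed_iff (hcm : cm ≤ n) (hcp : cp ∈ Ioo ((n : ℝ) + b - 1) (n + b))
    (hb : b ≤ n) (hi : 2 ≤ i) (hin : i ≤ n) :
    ((hLine cm ∪ hLine cp ∪ vLine c) ∩
      openSquare ((n : ℝ) - 1) ((i : ℝ) - n) (n + i - 1)).Nonempty ↔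
      i ≤ b ∨ c ∈ Ioo ((i : ℝ) - n) (i - n + (n - 1)) := by
  have hiR : (2 : ℝ) ≤ i := by exact_mod_cast hi
  have hinR : (i : ℝ) ≤ n := by exact_mod_cast hin
  have hbR : (b : ℝ) ≤ n := by exact_mod_cast hb
  have hcp' : cp - n ∈ Ioo ((b : ℝ) - 1) b := ⟨by linarith [hcp.1], by linarith [hcp.2]⟩
  have hcm_not_mem : cm ∉ Ioo ((n : ℝ) + i - 1) (n + i - 1 + (n - 1)) :=
    fun h => by linarith [h.1]
  have hcp_mem : cp ∈ Ioo ((n : ℝ) + i - 1) (n + i - 1 + (n - 1)) ↔ i ≤ b := by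
    rw [← natCast_sub_one_lt_iff_of_mem_Ioo hcp']
    refine ⟨fun h => by linarith [h.1], fun h => ⟨by linarith, by linarith [hcp.2]⟩⟩
  rw [lines_inter_openSquare_nonempty_iff (by linarith), hcp_mem]
  simp only [hcm_not_mem, false_or]

theorem chGadget_stabbed_iff (ha : a ∈ Icc 1 n) (hb : b ∈ Icc 1 n)
    (hcm : cm ∈ Ioo ((a : ℝ) - 1) a) (hcp : cp ∈ Ioo ((n : ℝ) + b - 1) (n + b)) :
    (∀ s ∈ ChGadget n, ((hLine cm ∪ hLine cp ∪ vLine c) ∩ s).Nonempty) ↔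
      (∀ i : ℕ, 1 ≤ i → i < a → c ∈ Ioo (i : ℝ) (i + (n - 1))) ∧
      (∀ i : ℕ, b < i → i ≤ n → c ∈ Ioo ((i : ℝ) - n) (i - n + (n - 1))) := by
  obtain ⟨ha1, han⟩ := ha
  obtain ⟨hb1, hbn⟩ := hb
  have hcm_le : cm ≤ n := by linarith [hcm.2, (by exact_mod_cast han : (a : ℝ) ≤ n)]
  have hcp_ge : (n : ℝ) ≤ cp := by linarith [hcp.1, (by exact_mod_cast hb1 : (1 : ℝ) ≤ b)]
  constructor
  · intro h
    refine ⟨fun i hi hia => ?_, fun i hbi hin => ?_⟩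
    · have hstab := h _ (Or.inl ⟨i, hi, by omega, rfl⟩)
      rw [lowerSquare_stabbed_iff ha1 hcm hcp_ge hi (by omega)] at hstab
      exact hstab.resolve_left (by omega)
    · have hstab := h _ (Or.inr ⟨i, by omega, hin, rfl⟩)
      rw [upperSquare_stabbed_iff hcm_le hcp hbn (by omega) hin] at hstab
      exact hstab.resolve_left (by omega)
  · rintro ⟨hlow, hup⟩ s (⟨i, hi, hin, rfl⟩ | ⟨i, hi, hin, rfl⟩)
    · rw [lowerSquare_stabbed_iff ha1 hcm hcp_ge hi (by omega)]
      exact (le_or_gt a i).imp_right (hlow i hi)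
    · rw [upperSquare_stabbed_iff hcm_le hcp hbn hi hin]
      exact (le_or_gt i b).imp_right (hup i · hin)

end Gadget

theorem consistency_gadget_general (n : ℕ) (a b : ℕ)
    (ha : a ∈ Set.Icc 1 n) (hb : b ∈ Set.Icc 1 n)
    (cm cp : ℝ) (hcm : cm ∈ Set.Ioo ((a : ℝ) - 1) (a : ℝ))
    (hcp : cp ∈ Set.Ioo ((n : ℝ) + b - 1) ((n : ℝ) + b)) :
    (∃ c : ℝ, ∀ s ∈ ChGadget n,
      ((hLine cm ∪ hLine cp ∪ vLine c) ∩ s).Nonempty) ↔ a ≤ b := by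
  simp_rw [chGadget_stabbed_iff ha hb hcm hcp]
  obtain ⟨ha1, han⟩ := ha
  obtain ⟨hb1, hbn⟩ := hb
  constructor
  · rintro ⟨c, hlow, hup⟩
    by_contra! hba
    have hc_gt : ((a - 1 : ℕ) : ℝ) < c := (hlow (a - 1) (by omega) (by omega)).1
    have hc_lt : c < ((b + 1 : ℕ) : ℝ) - n + (n - 1) := (hup (b + 1) (by omega) (by omega)).2
    have : ((a - 1 : ℕ) : ℝ) < b := by push_cast at hc_lt; linarith
    have : a - 1 < b := by exact_mod_cast this
    omega
  · intro hab
    rify at ha1 han hb1 hbn hab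
    refine ⟨a - 1 / 2, fun i hi hia => ?_, fun i hbi hin => ?_⟩
    · have hi' : (1 : ℝ) ≤ i := by exact_mod_cast hi
      have hia' : (i : ℝ) + 1 ≤ a := by exact_mod_cast hia
      constructor <;> linarith
    · have hbi' : (b : ℝ) + 1 ≤ i := by exact_mod_cast hbi
      have hin' : (i : ℝ) ≤ n := by exact_mod_cast hin
      constructor <;> linarith

/-- Two antipodal horizontal lines representing `a` (negative) and `b` (positive) can be
completed by a single vertical line to stab the whole consistency gadget iff `b ≥ a`. -/
theorem consistency_gadget (n : ℕ) (hn : 2 ≤ n) (a b : ℕ)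
    (ha : a ∈ Set.Icc 1 n) (hb : b ∈ Set.Icc 1 n)
    (cm cp : ℝ) (hcm : cm ∈ Set.Ioo ((a : ℝ) - 1) (a : ℝ))
    (hcp : cp ∈ Set.Ioo ((n : ℝ) + b - 1) ((n : ℝ) + b)) :
    (∃ c : ℝ, ∀ s ∈ ChGadget n,
      ((hLine cm ∪ hLine cp ∪ vLine c) ∩ s).Nonempty) ↔ a ≤ b :=
  consistency_gadget_general n a b ha hb cm cp hcm hcp
end

section
/- Let k ≥ 0 and let S be a finite family of pairwise disjoint closed axis-parallel unit squares in ℝ² such that for every real x₀ at most k+1 squares of S have lower-left x-coordinate equal to x₀, and for every real y₀ at most k+1 squares of S have lower-left y-coordinate equal to y₀. If there exists an axis-parallel line ℓ with |I(ℓ)| > 2k+1, then there exists an axis-parallel line ℓ* parallel to ℓ with k+1 ≤ |I(ℓ*)| ≤ 2k+1. -/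
/-- An axis-parallel line is a vertical or a horizontal line. -/
def IsAPLine (L : Set (ℝ × ℝ)) : Prop := (∃ c, L = vLine c) ∨ (∃ c, L = hLine c)

/-- The closed axis-parallel unit square with lower-left corner `(x, y)`. -/
def closedSquare (x y : ℝ) : Set (ℝ × ℝ) := Set.Icc x (x + 1) ×ˢ Set.Icc y (y + 1)

/-
A line `x = c` meets the square with lower-left corner `(x, y)` iff `x ∈ [c - 1, c]`, so the
question is about a finite multiset of reals and windows `[t - 1, t]`. Among the windows
`[b, b + 1]` whose left end `b` is a value and which hold at least `k + 1` values, take the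
rightmost one. If it held more than `2k + 1` values, drop the at most `k + 1` values equal to its
minimum and start a window at the next smallest value: it still holds at least `k + 1` values
and lies further to the right.
-/

open Finset

section UnitWindow

variable {α : Type*} (S : Finset α) (f : α → ℝ)

noncomputable def unitWindow (t : ℝ) : Finset α := {s ∈ S | t - 1 ≤ f s ∧ f s ≤ t}

variable {S f}

lemma exists_unitWindow_right {k : ℕ} (hmult : ∀ x, #{s ∈ S | f s = x} ≤ k + 1) {t : ℝ}
    (ht : 2 * k + 1 < #(unitWindow S f t)) :
    ∃ s ∈ S, t < f s + 1 ∧ k + 1 ≤ #(unitWindow S f (f s + 1)) := by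
  set A := unitWindow S f t
  have mem_A {s} : s ∈ A ↔ s ∈ S ∧ t - 1 ≤ f s ∧ f s ≤ t := mem_filter
  obtain ⟨sa, hsaA, hsa_min⟩ := A.exists_min_image f (card_pos.mp (by omega))
  set B := {s ∈ A | ¬f s = f sa}
  have hB : k + 1 ≤ #B := by
    have hsplit : #{s ∈ A | f s = f sa} + #B = #A := card_filter_add_card_filter_not _
    have hbot : #{s ∈ A | f s = f sa} ≤ k + 1 :=
      (card_le_card (filter_subset_filter _ (filter_subset _ S))).trans (hmult (f sa))
    omega
  obtain ⟨sb, hsbB, hsb_min⟩ := B.exists_min_image f (card_pos.mp (by omega))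
  obtain ⟨hsbA, hsb_ne⟩ := mem_filter.mp hsbB
  have hab : f sa < f sb := lt_of_le_of_ne (hsa_min sb hsbA) (Ne.symm hsb_ne)
  refine ⟨sb, (mem_A.mp hsbA).1, by linarith [(mem_A.mp hsaA).2.1], ?_⟩
  refine hB.trans (card_le_card fun s hs => ?_)
  obtain ⟨hsS, -, hst⟩ := mem_A.mp (mem_filter.mp hs).1
  have hsb_le := hsb_min s hs
  exact mem_filter.mpr ⟨hsS, by linarith, by linarith [(mem_A.mp hsbA).2.1]⟩

theorem exists_unitWindow_card_mem_Icc {k : ℕ} (hmult : ∀ x, #{s ∈ S | f s = x} ≤ k + 1)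
    {t : ℝ} (ht : 2 * k + 1 < #(unitWindow S f t)) :
    ∃ t', k + 1 ≤ #(unitWindow S f t') ∧ #(unitWindow S f t') ≤ 2 * k + 1 := by
  set C := {s ∈ S | k + 1 ≤ #(unitWindow S f (f s + 1))}
  have hC : C.Nonempty := by
    obtain ⟨s, hs, -, hk⟩ := exists_unitWindow_right hmult ht
    exact ⟨s, mem_filter.mpr ⟨hs, hk⟩⟩
  obtain ⟨s, hsC, hmax⟩ := C.exists_max_image f hC
  refine ⟨f s + 1, (mem_filter.mp hsC).2, not_lt.mp fun hbig => ?_⟩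
  obtain ⟨s', hs', hlt, hk⟩ := exists_unitWindow_right hmult hbig
  have := hmax s' (mem_filter.mpr ⟨hs', hk⟩)
  linarith

end UnitWindow

lemma vLine_inter_closedSquare_nonempty_iff (c x y : ℝ) :
    (vLine c ∩ closedSquare x y).Nonempty ↔ c - 1 ≤ x ∧ x ≤ c := by
  constructor
  · rintro ⟨p, hp, hpx, -⟩
    change p.1 = c at hp
    subst hp
    exact ⟨by linarith [hpx.2], hpx.1⟩
  · rintro ⟨h1, h2⟩
    exact ⟨(c, y), rfl, ⟨h2, by linarith⟩, le_rfl, by linarith⟩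

lemma hLine_inter_closedSquare_nonempty_iff (c x y : ℝ) :
    (hLine c ∩ closedSquare x y).Nonempty ↔ c - 1 ≤ y ∧ y ≤ c := by
  constructor
  · rintro ⟨p, hp, -, hpy⟩
    change p.2 = c at hp
    subst hp
    exact ⟨by linarith [hpy.2], hpy.1⟩
  · rintro ⟨h1, h2⟩
    exact ⟨(x, c), rfl, ⟨le_rfl, by linarith⟩, h2, by linarith⟩

lemma vLine_ne_hLine (a b : ℝ) : vLine a ≠ hLine b := by
  intro h
  have : ((a, b + 1) : ℝ × ℝ) ∈ hLine b := h ▸ rfl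
  simp [hLine] at this

lemma ncard_setOf_mem_and {α : Type*} (S : Finset α) (p : α → Prop) [DecidablePred p] :
    {s ∈ (S : Set α) | p s}.ncard = #{s ∈ S | p s} := by
  rw [← Set.ncard_coe_finset, coe_filter]
  rfl

lemma ncard_meeting_vLine (S : Finset (ℝ × ℝ)) (c : ℝ) :
    {s ∈ (S : Set (ℝ × ℝ)) | (vLine c ∩ closedSquare s.1 s.2).Nonempty}.ncard =
      #(unitWindow S Prod.fst c) := by
  simp only [vLine_inter_closedSquare_nonempty_iff, unitWindow]
  exact ncard_setOf_mem_and S _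

lemma ncard_meeting_hLine (S : Finset (ℝ × ℝ)) (c : ℝ) :
    {s ∈ (S : Set (ℝ × ℝ)) | (hLine c ∩ closedSquare s.1 s.2).Nonempty}.ncard =
      #(unitWindow S Prod.snd c) := by
  simp only [hLine_inter_closedSquare_nonempty_iff, unitWindow]
  exact ncard_setOf_mem_and S _

theorem intermediate_line_exists_general (k : ℕ) (S : Finset (ℝ × ℝ))
    (hx : ∀ x0 : ℝ, {s ∈ (S : Set (ℝ × ℝ)) | s.1 = x0}.ncard ≤ k + 1)
    (hy : ∀ y0 : ℝ, {s ∈ (S : Set (ℝ × ℝ)) | s.2 = y0}.ncard ≤ k + 1)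
    (ℓ : Set (ℝ × ℝ)) (hap : IsAPLine ℓ)
    (hbig : 2 * k + 1 <
      {s ∈ (S : Set (ℝ × ℝ)) | (ℓ ∩ closedSquare s.1 s.2).Nonempty}.ncard) :
    ∃ ℓ' : Set (ℝ × ℝ),
      ((∃ c, ℓ = vLine c) → ∃ c, ℓ' = vLine c) ∧
      ((∃ c, ℓ = hLine c) → ∃ c, ℓ' = hLine c) ∧
      k + 1 ≤ {s ∈ (S : Set (ℝ × ℝ)) |
        (ℓ' ∩ closedSquare s.1 s.2).Nonempty}.ncard ∧
      {s ∈ (S : Set (ℝ × ℝ)) |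
        (ℓ' ∩ closedSquare s.1 s.2).Nonempty}.ncard ≤ 2 * k + 1 := by
  rcases hap with ⟨c, rfl⟩ | ⟨c, rfl⟩
  · rw [ncard_meeting_vLine] at hbig
    obtain ⟨t, ht⟩ := exists_unitWindow_card_mem_Icc
      (fun x => ncard_setOf_mem_and S (·.1 = x) ▸ hx x) hbig
    refine ⟨vLine t, fun _ => ⟨t, rfl⟩, fun ⟨c', h⟩ => (vLine_ne_hLine c c' h).elim, ?_⟩
    rwa [ncard_meeting_vLine]
  · rw [ncard_meeting_hLine] at hbig
    obtain ⟨t, ht⟩ := exists_unitWindow_card_mem_Icc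
      (fun y => ncard_setOf_mem_and S (·.2 = y) ▸ hy y) hbig
    refine ⟨hLine t, fun ⟨c', h⟩ => (vLine_ne_hLine c' c h.symm).elim, fun _ => ⟨t, rfl⟩, ?_⟩
    rwa [ncard_meeting_hLine]

/-- In a data-reduced family (at most `k+1` squares share any lower-left `x`- or
`y`-coordinate), if some axis-parallel line meets more than `2k+1` squares, then some
parallel line meets at least `k+1` and at most `2k+1` squares. -/
theorem intermediate_line_exists (k : ℕ) (S : Finset (ℝ × ℝ))
    (hdisj : ∀ s ∈ S, ∀ s' ∈ S, s ≠ s' →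
      Disjoint (closedSquare s.1 s.2) (closedSquare s'.1 s'.2))
    (hx : ∀ x0 : ℝ, {s ∈ (S : Set (ℝ × ℝ)) | s.1 = x0}.ncard ≤ k + 1)
    (hy : ∀ y0 : ℝ, {s ∈ (S : Set (ℝ × ℝ)) | s.2 = y0}.ncard ≤ k + 1)
    (ℓ : Set (ℝ × ℝ)) (hap : IsAPLine ℓ)
    (hbig : 2 * k + 1 <
      {s ∈ (S : Set (ℝ × ℝ)) | (ℓ ∩ closedSquare s.1 s.2).Nonempty}.ncard) :
    ∃ ℓ' : Set (ℝ × ℝ),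
      ((∃ c, ℓ = vLine c) → ∃ c, ℓ' = vLine c) ∧
      ((∃ c, ℓ = hLine c) → ∃ c, ℓ' = hLine c) ∧
      k + 1 ≤ {s ∈ (S : Set (ℝ × ℝ)) |
        (ℓ' ∩ closedSquare s.1 s.2).Nonempty}.ncard ∧
      {s ∈ (S : Set (ℝ × ℝ)) |
        (ℓ' ∩ closedSquare s.1 s.2).Nonempty}.ncard ≤ 2 * k + 1 :=
  intermediate_line_exists_general k S hx hy ℓ hap hbig
end
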